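/- arXiv:2102.11725 — 6 statements merged into one kernel-verified Lean document; each statement's English description precedes it below -/
import Mathlib

section
/- An integral domain R is a discrete valuation ring if and only if R has a unique maximal ideal, this maximal ideal is nonzero, and for all ideals I, J of R with J ⊆ I there exists an ideal I' of R with I · I' = J (i.e., to contain is to divide). -/
open IsLocalRing FractionalIdeal nonZeroDivisors

theorem FractionalIdeal.isUnit_coeIdeal_of_dvd_span_singleton {R K : Type*} [CommRing R]
    [IsDomain R] [Field K] [Algebra R K] [IsFractionRing R K] {I : Ideal R} {x : R} (hx : x ≠ 0)
    (h : I ∣ Ideal.span {x}) : IsUnit (I : FractionalIdeal R⁰ K) := by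
  obtain ⟨I', hI'⟩ := h
  have hx_unit : IsUnit ((Ideal.span {x} : Ideal R) : FractionalIdeal R⁰ K) :=
    .of_mul_eq_one _ (coe_ideal_span_singleton_mul_inv K hx)
  rw [hI', coeIdeal_mul] at hx_unit
  exact isUnit_of_mul_isUnit_left hx_unit

/-- Every nonzero ideal divides a nonzero principal ideal inside it, hence is invertible, and
invertible ideals of a semilocal domain are principal. -/
theorem IsPrincipalIdealRing.of_finite_maximals_of_forall_le_dvd {R : Type*} [CommRing R]
    [IsDomain R] (hf : {I : Ideal R | I.IsMaximal}.Finite)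
    (h : ∀ I J : Ideal R, J ≤ I → I ∣ J) : IsPrincipalIdealRing R := by
  refine ⟨fun I => ?_⟩
  obtain rfl | hI := eq_or_ne I ⊥
  · exact bot_isPrincipal
  obtain ⟨x, hxI, hx⟩ := Submodule.exists_mem_ne_zero_of_ne_bot hI
  exact Ideal.IsPrincipal.of_finite_maximals_of_isUnit hf
    (isUnit_coeIdeal_of_dvd_span_singleton hx (h I _ ((Ideal.span_singleton_le_iff_mem I).mpr hxI)))

/-- An integral domain R is a discrete valuation ring iff R has a unique maximal ideal,
this maximal ideal is nonzero, and for all ideals I, J with J ⊆ I, I divides J. -/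
theorem stmt3 (R : Type*) [CommRing R] [IsDomain R] :
    IsDiscreteValuationRing R ↔
      (∃ M : Ideal R, M.IsMaximal ∧ M ≠ ⊥ ∧ ∀ M' : Ideal R, M'.IsMaximal → M' = M) ∧
      (∀ I J : Ideal R, J ≤ I → ∃ I' : Ideal R, I * I' = J) := by
  constructor
  · intro _
    refine ⟨⟨maximalIdeal R, inferInstance, IsDiscreteValuationRing.not_a_field R,
      fun _ hM' => eq_maximalIdeal hM'⟩, fun I J hJI => ?_⟩
    obtain ⟨I', hI'⟩ := Ideal.dvd_iff_le.mpr hJI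
    exact ⟨I', hI'.symm⟩
  · rintro ⟨⟨M, hM, hM_ne_bot, hM_unique⟩, h_dvd⟩
    have : IsLocalRing R := .of_unique_max_ideal ⟨M, hM, hM_unique⟩
    have hf : {I : Ideal R | I.IsMaximal}.Finite :=
      (Set.finite_singleton M).subset hM_unique
    have : IsPrincipalIdealRing R :=
      .of_finite_maximals_of_forall_le_dvd hf fun I J hJI => (h_dvd I J hJI).imp fun _ => Eq.symm
    exact { not_a_field' := eq_maximalIdeal hM ▸ hM_ne_bot }
end

section
/- An integral domain R is a Dedekind domain if and only if for every nonzero ideal I of R there exists a nonzero ideal J of R such that the product I · J is a principal ideal. -/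
/-!
Dedekind domains are the domains in which every nonzero fractional ideal is invertible, and every
fractional ideal is a nonzero scalar multiple of an integral ideal (its numerator). If `I * J` is a
nonzero principal ideal `(b)`, then `J * (b⁻¹)` is an inverse of `I`; conversely, in a Dedekind
domain `I` divides `(a)` for any nonzero `a ∈ I`.
-/

open scoped nonZeroDivisors

namespace FractionalIdeal

variable {R K : Type*} [CommRing R] [Field K] [Algebra R K] [IsFractionRing R K]

theorem isUnit_spanSingleton {x : K} (hx : x ≠ 0) : IsUnit (spanSingleton R⁰ x) :=
  IsUnit.of_mul_eq_one (spanSingleton R⁰ x⁻¹) <| by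
    rw [spanSingleton_mul_spanSingleton, mul_inv_cancel₀ hx, spanSingleton_one]

theorem isUnit_coeIdeal_of_mul_isPrincipal {I J : Ideal R} (hIJ : I * J ≠ ⊥)
    (hprin : (I * J).IsPrincipal) : IsUnit (I : FractionalIdeal R⁰ K) := by
  obtain ⟨b, hb⟩ := hprin
  have hb0 : b ≠ 0 := by
    rintro rfl
    exact hIJ (by simpa using hb)
  have hprod : (I : FractionalIdeal R⁰ K) * J = spanSingleton R⁰ (algebraMap R K b) := by
    rw [← coeIdeal_mul, hb]
    exact coeIdeal_span_singleton b
  refine isUnit_of_mul_isUnit_left (y := (J : FractionalIdeal R⁰ K)) ?_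
  rw [hprod]
  exact isUnit_spanSingleton ((map_ne_zero_iff _ (IsFractionRing.injective R K)).mpr hb0)

end FractionalIdeal

theorem Ideal.exists_ne_bot_mul_isPrincipal {R : Type*} [CommRing R] [IsDedekindDomain R]
    {I : Ideal R} (hI : I ≠ ⊥) : ∃ J : Ideal R, J ≠ ⊥ ∧ (I * J).IsPrincipal := by
  obtain ⟨a, haI, ha⟩ := Submodule.exists_mem_ne_zero_of_ne_bot hI
  obtain ⟨J, hJ⟩ := Ideal.dvd_iff_le.mpr ((Ideal.span_singleton_le_iff_mem I).mpr haI)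
  refine ⟨J, ?_, ⟨a, hJ.symm⟩⟩
  rintro rfl
  rw [Ideal.mul_bot, Ideal.span_singleton_eq_bot] at hJ
  exact ha hJ

/-- An integral domain R is a Dedekind domain iff for every nonzero ideal I of R there
exists a nonzero ideal J of R such that I * J is principal. -/
theorem stmt6 (R : Type*) [CommRing R] [IsDomain R] :
    IsDedekindDomain R ↔
      ∀ I : Ideal R, I ≠ ⊥ → ∃ J : Ideal R, J ≠ ⊥ ∧ (I * J).IsPrincipal := by
  refine ⟨fun _ I hI => Ideal.exists_ne_bot_mul_isPrincipal hI, fun h => ?_⟩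
  rw [isDedekindDomain_iff_mul_inv_cancel (K := FractionRing R)]
  intro I hI
  rw [FractionalIdeal.mul_inv_cancel_iff_isUnit, ← FractionalIdeal.isUnit_num]
  have hnum : I.num ≠ ⊥ := fun h0 => hI (FractionalIdeal.num_eq_zero_iff.mp h0)
  obtain ⟨J, hJ, hprin⟩ := h I.num hnum
  exact FractionalIdeal.isUnit_coeIdeal_of_mul_isPrincipal (mul_ne_zero hnum hJ) hprin
end

section
/- Let R be a Noetherian integral domain with fraction field K, and assume R is not a field. Then there exist a nonzero prime ideal 𝔭 of R and an element x ∈ K not lying in (the image of) R such that x·a lies in (the image of) R for every a ∈ 𝔭. -/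
/-- Let R be a Noetherian integral domain with fraction field K, not a field. Then there
is a nonzero prime ideal 𝔭 of R and an x ∈ K not in the image of R with x·𝔭 ⊆ R. -/
theorem stmt7 (R : Type*) [CommRing R] [IsDomain R] [IsNoetherianRing R]
    (K : Type*) [Field K] [Algebra R K] [IsFractionRing R K] (hnf : ¬IsField R) :
    ∃ p : Ideal R, p ≠ ⊥ ∧ p.IsPrime ∧
      ∃ x : K, (¬∃ r : R, algebraMap R K r = x) ∧
        ∀ a ∈ p, ∃ r : R, algebraMap R K r = x * algebraMap R K a := by
  -- choose a nonzero nonunit `a`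
  obtain ⟨a, ha0, hau⟩ := Ring.exists_not_isUnit_of_not_isField hnf
  -- the set of colon ideals `(a) : (b)` with `b ∉ (a)`
  set S : Set (Ideal R) :=
    {I | ∃ b : R, b ∉ Ideal.span {a} ∧ I = (Ideal.span {a}).colon (Ideal.span {b})} with hS
  have h1a : (1 : R) ∉ Ideal.span {a} := fun h1 =>
    hau (isUnit_of_dvd_one (Ideal.mem_span_singleton.mp h1))
  have hSne : S.Nonempty := ⟨_, 1, h1a, rfl⟩
  -- take a maximal element of S
  have hwf : WellFounded ((· > ·) : Ideal R → Ideal R → Prop) :=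
    isNoetherian_iff.mp (by infer_instance)
  obtain ⟨p, hpS, hpmax⟩ := hwf.has_min S hSne
  obtain ⟨b, hb, rfl⟩ := hpS
  set p := (Ideal.span {a}).colon (Ideal.span {b}) with hp
  have hmem : ∀ r : R, r ∈ p ↔ r * b ∈ Ideal.span {a} := fun r =>
    Ideal.mem_colon_span_singleton
  -- p is maximal among all colon ideals with b' ∉ (a)
  have hmax : ∀ b' : R, b' ∉ Ideal.span {a} →
      p ≤ (Ideal.span {a}).colon (Ideal.span {b'}) →
      (Ideal.span {a}).colon (Ideal.span {b'}) = p := by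
    intro b' hb' hle
    by_contra hne
    exact hpmax _ ⟨b', hb', rfl⟩ (lt_of_le_of_ne hle (Ne.symm hne))
  have hane : a ≠ 0 := ha0
  have hpne : p ≠ ⊥ := by
    intro h
    have : a ∈ p := (hmem a).mpr (Ideal.mul_mem_right _ _ (Ideal.mem_span_singleton_self a))
    rw [h, Ideal.mem_bot] at this
    exact hane this
  have hprime : p.IsPrime := by
    constructor
    · intro htop
      have : (1 : R) ∈ p := htop ▸ Submodule.mem_top
      rw [hmem, one_mul] at this
      exact hb this
    · intro r s hrs
      by_cases hs : s ∈ p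
      · exact Or.inr hs
      left
      -- s * b ∉ (a), and p ≤ (a : s*b), r ∈ (a : s*b)
      have hsb : s * b ∉ Ideal.span {a} := fun h => hs ((hmem s).mpr h)
      have hle : p ≤ (Ideal.span {a}).colon (Ideal.span {s * b}) := by
        intro t ht
        rw [Ideal.mem_colon_span_singleton, show t * (s * b) = s * (t * b) by ring]
        exact Ideal.mul_mem_left _ _ ((hmem t).mp ht)
      have hr : r ∈ (Ideal.span {a}).colon (Ideal.span {s * b}) := by
        rw [Ideal.mem_colon_span_singleton, show r * (s * b) = r * s * b by ring]
        exact (hmem _).mp hrs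
      rw [hmax (s * b) hsb hle] at hr
      exact hr
  refine ⟨p, hpne, hprime, algebraMap R K b / algebraMap R K a, ?_, ?_⟩
  · have haK : algebraMap R K a ≠ 0 := fun h =>
      hane (IsFractionRing.injective R K (by rw [h, map_zero]))
    rintro ⟨r, hr⟩
    rw [eq_div_iff haK, ← map_mul] at hr
    have : b = r * a := IsFractionRing.injective R K hr.symm
    exact hb (Ideal.mem_span_singleton.mpr ⟨r, by rw [this]; ring⟩)
  · intro t ht
    have := (hmem t).mp ht
    obtain ⟨c, hc⟩ := Ideal.mem_span_singleton.mp this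
    refine ⟨c, ?_⟩
    have haK : algebraMap R K a ≠ 0 := fun h =>
      hane (IsFractionRing.injective R K (by rw [h, map_zero]))
    field_simp
    rw [← map_mul, ← map_mul]
    congr 1
    rw [mul_comm c a, ← hc]; ring
end

section
/- (Approximation theorem) Let R be a Dedekind domain (not a field) with fraction field K. Let 𝔭₁, …, 𝔭ₖ be distinct nonzero prime ideals of R, let x₁, …, xₖ ∈ K, and let n₁, …, nₖ be integers. Then there exists x ∈ K such that v_{𝔭ᵢ}(x − xᵢ) ≥ nᵢ for each i = 1, …, k, and v_𝔭(x) ≥ 0 for every nonzero prime ideal 𝔭 of R distinct from all the 𝔭ᵢ. -/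
/-! Clear denominators: write `xᵢ = aᵢ / b` with `aᵢ, b ∈ R`. By the Chinese remainder theorem
there is `y₀ ∈ R` with `v_{𝔭ᵢ}(y₀ - aᵢ) ≥ nᵢ + v_{𝔭ᵢ}(b)` for each `i` and `v_𝔭(y₀) ≥ v_𝔭(b)` at the
finitely many other primes `𝔭` dividing `b`; then `y = y₀ / b` works. -/

open IsDedekindDomain IsDedekindDomain.HeightOneSpectrum WithZero

theorem WithZero.exp_neg_sub_log {G : Type*} [AddCommGroup G] {x : Gᵐ⁰} (hx : x ≠ 0) (m : G) :
    exp (-(m - log x)) = exp (-m) * x := by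
  rw [neg_sub, sub_eq_add_neg, exp_add, exp_log hx, mul_comm]

namespace IsDedekindDomain.HeightOneSpectrum

variable {R : Type*} [CommRing R] [IsDedekindDomain R]

theorem exists_forall_intValuation_sub_le (S : Finset (HeightOneSpectrum R))
    (a : HeightOneSpectrum R → R) (n : HeightOneSpectrum R → ℤ) :
    ∃ y : R, ∀ v ∈ S, v.intValuation (y - a v) ≤ exp (-n v) := by
  obtain ⟨y, hy⟩ := exists_forall_sub_mem_ideal (s := S) asIdeal (fun v ↦ (n v).toNat)
    (fun v _ ↦ v.prime) (fun v _ w _ hvw h ↦ hvw (HeightOneSpectrum.ext h)) (fun v ↦ a v)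
  refine ⟨y, fun v hv ↦ ?_⟩
  calc v.intValuation (y - a v) ≤ exp (-((n v).toNat : ℤ)) :=
        (v.intValuation_le_pow_iff_mem _ _).mpr (hy v hv)
    _ ≤ exp (-n v) := exp_le_exp.mpr (neg_le_neg (Int.self_le_toNat _))

theorem finite_setOf_intValuation_lt_one {b : R} (hb : b ≠ 0) :
    {v : HeightOneSpectrum R | v.intValuation b < 1}.Finite := by
  simp_rw [intValuation_lt_one_iff_dvd]
  exact Ideal.finite_factors (by simpa [Ideal.span_singleton_eq_bot] using hb)

theorem exists_intValuation_sub_le_mul {b : R} (hb : b ≠ 0) (S : Finset (HeightOneSpectrum R))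
    (a : HeightOneSpectrum R → R) (n : HeightOneSpectrum R → ℤ) :
    ∃ y : R, (∀ v ∈ S, v.intValuation (y - a v) ≤ exp (-n v) * v.intValuation b) ∧
      ∀ v ∉ S, v.intValuation y ≤ v.intValuation b := by
  classical
  set T := S ∪ (finite_setOf_intValuation_lt_one hb).toFinset
  obtain ⟨y, hy⟩ := exists_forall_intValuation_sub_le T (fun v ↦ if v ∈ S then a v else 0)
    (fun v ↦ (if v ∈ S then n v else 0) - log (v.intValuation b))
  refine ⟨y, fun v hv ↦ ?_, fun v hv ↦ ?_⟩
  · simpa only [if_pos hv, exp_neg_sub_log (v.intValuation_ne_zero b hb)] using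
      hy v (Finset.mem_union_left _ hv)
  · by_cases hvT : v ∈ T
    · simpa only [if_neg hv, sub_zero, exp_neg_sub_log (v.intValuation_ne_zero b hb), neg_zero,
        exp_zero, one_mul] using hy v hvT
    · have hb1 : v.intValuation b = 1 :=
        (v.intValuation_le_one b).antisymm (not_lt.mp fun h ↦ hvT (by simp [T, h]))
      exact hb1 ▸ v.intValuation_le_one y

variable {K : Type*} [Field K] [Algebra R K] [IsFractionRing R K]

theorem valuation_algebraMap_div_le_iff (v : HeightOneSpectrum R) (r : R) {b : R} (hb : b ≠ 0)
    (γ : ℤᵐ⁰) :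
    v.valuation K (algebraMap R K r / algebraMap R K b) ≤ γ ↔
      v.intValuation r ≤ γ * v.intValuation b := by
  rw [map_div₀, valuation_of_algebraMap, valuation_of_algebraMap,
    div_le_iff₀ (zero_lt_iff.mpr (v.intValuation_ne_zero b hb))]

theorem exists_forall_valuation_sub_le (S : Finset (HeightOneSpectrum R))
    (x : HeightOneSpectrum R → K) (n : HeightOneSpectrum R → ℤ) :
    ∃ y : K, (∀ v ∈ S, v.valuation K (y - x v) ≤ exp (-n v)) ∧
      ∀ v ∉ S, v.valuation K y ≤ 1 := by
  obtain ⟨b, hb⟩ := IsLocalization.exist_integer_multiples (nonZeroDivisors R) S x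
  have hb0 : (b : R) ≠ 0 := nonZeroDivisors.coe_ne_zero b
  choose! a ha using hb
  have hx : ∀ v ∈ S, x v = algebraMap R K (a v) / algebraMap R K b := fun v hv ↦ by
    rw [ha v hv, Algebra.smul_def, mul_div_cancel_left₀ _ (by simp [hb0])]
  obtain ⟨y, hyS, hyT⟩ := exists_intValuation_sub_le_mul hb0 S a n
  refine ⟨algebraMap R K y / algebraMap R K b, fun v hv ↦ ?_, fun v hv ↦ ?_⟩
  · rw [hx v hv, ← sub_div, ← map_sub, valuation_algebraMap_div_le_iff v _ hb0]
    exact hyS v hv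
  · rw [valuation_algebraMap_div_le_iff v _ hb0, one_mul]
    exact hyT v hv

end IsDedekindDomain.HeightOneSpectrum

theorem stmt13_general (R : Type*) [CommRing R] [IsDedekindDomain R]
    (K : Type*) [Field K] [Algebra R K] [IsFractionRing R K]
    (k : ℕ) (p : Fin k → IsDedekindDomain.HeightOneSpectrum R)
    (hp : Function.Injective p) (x : Fin k → K) (n : Fin k → ℤ) :
    ∃ y : K,
      (∀ i : Fin k,
        (p i).valuation K (y - x i) ≤
          ((Multiplicative.ofAdd (-(n i)) : Multiplicative ℤ) : WithZero (Multiplicative ℤ))) ∧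
      (∀ q : IsDedekindDomain.HeightOneSpectrum R, (∀ i : Fin k, q ≠ p i) →
        q.valuation K y ≤ 1) := by
  classical
  obtain ⟨y, hyS, hyT⟩ := exists_forall_valuation_sub_le (Finset.univ.image p)
    (Function.extend p x 0) (Function.extend p n 0)
  refine ⟨y, fun i ↦ ?_, fun q hq ↦ hyT q (by simpa [eq_comm] using hq)⟩
  have hi := hyS (p i) (Finset.mem_image_of_mem p (Finset.mem_univ i))
  rwa [hp.extend_apply, hp.extend_apply] at hi

/-- Approximation theorem: given distinct nonzero primes 𝔭₁,…,𝔭ₖ of a Dedekind domain R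
(not a field) with fraction field K, elements x₁,…,xₖ ∈ K and integers n₁,…,nₖ, there is
an x ∈ K with v_{𝔭ᵢ}(x − xᵢ) ≥ nᵢ for each i, and v_𝔭(x) ≥ 0 for every other nonzero
prime 𝔭.  (Here the additive inequality v(y) ≥ n is expressed multiplicatively as
v(y) ≤ ofAdd (−n), and v(y) ≥ 0 as v(y) ≤ 1.) -/
theorem stmt13 (R : Type*) [CommRing R] [IsDomain R] [IsDedekindDomain R]
    (hnf : ¬IsField R)
    (K : Type*) [Field K] [Algebra R K] [IsFractionRing R K]
    (k : ℕ) (p : Fin k → IsDedekindDomain.HeightOneSpectrum R)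
    (hp : Function.Injective p) (x : Fin k → K) (n : Fin k → ℤ) :
    ∃ y : K,
      (∀ i : Fin k,
        (p i).valuation K (y - x i) ≤
          ((Multiplicative.ofAdd (-(n i)) : Multiplicative ℤ) : WithZero (Multiplicative ℤ))) ∧
      (∀ q : IsDedekindDomain.HeightOneSpectrum R, (∀ i : Fin k, q ≠ p i) →
        q.valuation K y ≤ 1) :=
  stmt13_general R K k p hp x n
end

section
/- An integral domain R is a Dedekind domain if and only if R is a divisibility domain, i.e., for all nonzero ideals I, J of R with J ⊆ I there exists an ideal I' of R with I · I' = J. -/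
/-!
A domain is Dedekind exactly when every nonzero fractional ideal is invertible, and every
fractional ideal is a principal fractional ideal times an integral one. A nonzero integral
ideal `I` contains some `b ≠ 0`; in a divisibility domain `I` then divides the principal
ideal `(b)`, which is invertible, so `I` is invertible too.
-/

open FractionalIdeal nonZeroDivisors

section

variable {R : Type*} [CommRing R] {K : Type*} [Field K] [Algebra R K]
  [IsFractionRing R K]

theorem FractionalIdeal.isUnit_spanSingleton_s16 {x : K} (hx : x ≠ 0) :
    IsUnit (spanSingleton R⁰ x) :=
  IsUnit.of_mul_eq_one (spanSingleton R⁰ x⁻¹) <| by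
    rw [spanSingleton_mul_spanSingleton, mul_inv_cancel₀ hx, spanSingleton_one]

theorem FractionalIdeal.isUnit_coeIdeal_of_mul_eq_span_singleton {I J : Ideal R} {b : R}
    (hb : b ≠ 0) (h : I * J = Ideal.span {b}) : IsUnit (I : FractionalIdeal R⁰ K) := by
  have hbK : algebraMap R K b ≠ 0 := (map_ne_zero_iff _ (IsFractionRing.injective R K)).mpr hb
  refine isUnit_of_mul_isUnit_left (y := (J : FractionalIdeal R⁰ K)) ?_
  rw [← coeIdeal_mul, h, coeIdeal_span_singleton]
  exact isUnit_spanSingleton_s16 hbK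

variable [IsDomain R]

variable (K) in
theorem isDedekindDomain_of_forall_isUnit_coeIdeal
    (h : ∀ I : Ideal R, I ≠ ⊥ → IsUnit (I : FractionalIdeal R⁰ K)) : IsDedekindDomain R := by
  refine (isDedekindDomain_iff_mul_inv_cancel (K := K)).mpr fun I hI => ?_
  obtain ⟨a, J, ha, rfl⟩ := exists_eq_spanSingleton_mul I
  have hJ : J ≠ ⊥ := by
    rintro rfl
    simp at hI
  have haK : algebraMap R K a ≠ 0 := (map_ne_zero_iff _ (IsFractionRing.injective R K)).mpr ha
  exact (mul_inv_cancel_iff_isUnit K).mpr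
    ((isUnit_spanSingleton_s16 (inv_ne_zero haK)).mul (h J hJ))

end

/-- An integral domain R is a Dedekind domain iff R is a divisibility domain: for all
nonzero ideals I, J of R with J ⊆ I there is an ideal I' with I * I' = J. -/
theorem stmt16 (R : Type*) [CommRing R] [IsDomain R] :
    IsDedekindDomain R ↔
      ∀ I J : Ideal R, I ≠ ⊥ → J ≠ ⊥ → J ≤ I → ∃ I' : Ideal R, I * I' = J := by
  constructor
  · intro _ I J _ _ hJI
    obtain ⟨I', hI'⟩ := Ideal.dvd_iff_le.mpr hJI
    exact ⟨I', hI'.symm⟩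
  · intro hdiv
    refine isDedekindDomain_of_forall_isUnit_coeIdeal (FractionRing R) fun I hI => ?_
    obtain ⟨b, hbI, hb⟩ := Submodule.exists_mem_ne_zero_of_ne_bot hI
    obtain ⟨I', hI'⟩ := hdiv I (Ideal.span {b}) hI (by simpa using hb)
      ((Ideal.span_singleton_le_iff_mem I).mpr hbI)
    exact isUnit_coeIdeal_of_mul_eq_span_singleton hb hI'
end

section
/- An integral domain R is a Dedekind domain if and only if R is a Noetherian cancellation domain, i.e., R is Noetherian and for all nonzero ideals I₁, I₂, J of R, the equality I₁ · J = I₂ · J implies I₁ = I₂. -/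
/-!
Cancellation turns identities between ideals into divisibility statements. From
`(I + J)³ = (I² + J²)(I + J)` it gives `(a, b)² = (a², b²)`, hence `ab = r a² + s b²`. Then `ra / b`
is a root of a monic quadratic, and cancelling in `(ra, b)² = (b)(ra, b)` gives `ra = t b`, so that
`(a, b)(r, 1 - t) = (b)` and `(a, b)` is invertible. The identity
`(X + Y)(Y + Z)(Z + X) = (X + Y + Z)(XY + YZ + ZX)` propagates invertibility from two-generated to
all finitely generated ideals, and a Noetherian domain whose nonzero ideals are invertible is
Dedekind.
-/

open Ideal FractionalIdeal nonZeroDivisors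

def IsCancellationDomain (R : Type*) [CommRing R] : Prop :=
  ∀ I₁ I₂ J : Ideal R, I₁ ≠ ⊥ → I₂ ≠ ⊥ → J ≠ ⊥ → I₁ * J = I₂ * J → I₁ = I₂

namespace Ideal

variable {R : Type*} [CommSemiring R]

theorem sup_mul_sup_mul_sup (X Y Z : Ideal R) :
    (X ⊔ Y) * (Y ⊔ Z) * (Z ⊔ X) = (X ⊔ Y ⊔ Z) * (X * Y ⊔ Y * Z ⊔ Z * X) := by
  have key : (X + Y) * (Y + Z) * (Z + X) + X * Y * Z =
      (X + Y + Z) * (X * Y + Y * Z + Z * X) := by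
    ring
  have hle : X * Y * Z ≤ (X ⊔ Y) * (Y ⊔ Z) * (Z ⊔ X) :=
    mul_le_mul' (mul_le_mul' le_sup_left le_sup_left) le_sup_left
  simpa only [add_eq_sup, sup_eq_left.mpr hle] using key

theorem sup_sq_mul_sup (I J : Ideal R) : (I ⊔ J) ^ 2 * (I ⊔ J) = (I ^ 2 ⊔ J ^ 2) * (I ⊔ J) := by
  have key : (I + J) ^ 2 * (I + J) =
      (I ^ 2 + J ^ 2) * (I + J) + (I ^ 2 * J + J ^ 2 * I) + (I ^ 2 * J + J ^ 2 * I) := by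
    ring
  have hle : I ^ 2 * J + J ^ 2 * I ≤ (I ^ 2 + J ^ 2) * (I + J) :=
    calc I ^ 2 * J + J ^ 2 * I ≤ I ^ 2 * J + J ^ 2 * I + (I ^ 3 + J ^ 3) := le_self_add
      _ = (I ^ 2 + J ^ 2) * (I + J) := by ring
  rw [add_assoc, add_idem, add_eq_left_iff_le.mpr hle] at key
  simpa only [add_eq_sup] using key

end Ideal

namespace FractionalIdeal

variable {R P : Type*} [CommRing R] {S : Submonoid R} [CommRing P] [Algebra R P]

theorem isUnit_coeIdeal_sup_sup {X Y Z : Ideal R} (hXY : IsUnit (↑(X ⊔ Y) : FractionalIdeal S P))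
    (hYZ : IsUnit (↑(Y ⊔ Z) : FractionalIdeal S P))
    (hZX : IsUnit (↑(Z ⊔ X) : FractionalIdeal S P)) :
    IsUnit (↑(X ⊔ Y ⊔ Z) : FractionalIdeal S P) := by
  have h := (hXY.mul hYZ).mul hZX
  rw [← coeIdeal_mul, ← coeIdeal_mul, sup_mul_sup_mul_sup, coeIdeal_mul] at h
  exact isUnit_of_mul_isUnit_left h

variable {K : Type*} [Field K] [Algebra R K] [IsFractionRing R K] [IsDomain R]

theorem isUnit_coeIdeal_span_singleton {x : R} (hx : x ≠ 0) :
    IsUnit (span {x} : FractionalIdeal R⁰ K) :=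
  mul_inv_cancel_iff_isUnit K |>.mp (coe_ideal_span_singleton_mul_inv K hx)

end FractionalIdeal

namespace IsCancellationDomain

variable {R : Type*} [CommRing R] (hc : IsCancellationDomain R)
include hc

theorem le_of_sq_le_mul_sup {I Q : Ideal R} (hQ : Q ≠ ⊥) (h : I ^ 2 ≤ Q * (I ⊔ Q)) : I ≤ Q := by
  have hIQ : I ⊔ Q ≠ ⊥ := ne_bot_of_le_ne_bot hQ le_sup_right
  have hmul : (I ⊔ Q) * (I ⊔ Q) = Q * (I ⊔ Q) := by
    refine le_antisymm ?_ (mul_mono_left le_sup_right)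
    rw [Ideal.sup_mul, Ideal.mul_sup, ← sq, mul_comm I Q]
    exact sup_le (sup_le h (mul_mono_right le_sup_left)) le_rfl
  exact sup_eq_right.mp (hc _ _ _ hIQ hQ hIQ hmul)

theorem dvd_of_sq_eq {p q c d : R} (hq : q ≠ 0) (h : p ^ 2 = c * q ^ 2 + d * (p * q)) : q ∣ p := by
  have hQ : (span {q} : Ideal R) ≠ ⊥ := by simpa using hq
  have hq_mem : q ∈ span {p} ⊔ span {q} := mem_sup_right (mem_span_singleton_self q)
  have hp_mem : p ∈ span {p} ⊔ span {q} := mem_sup_left (mem_span_singleton_self p)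
  have hle : (span {p} : Ideal R) ^ 2 ≤ span {q} * (span {p} ⊔ span {q}) := by
    rw [span_singleton_pow, span_singleton_le_iff_mem, h, sq, mul_comm p q]
    exact add_mem (mul_mem_left _ c (mul_mem_mul (mem_span_singleton_self q) hq_mem))
      (mul_mem_left _ d (mul_mem_mul (mem_span_singleton_self q) hp_mem))
  exact span_singleton_le_span_singleton.mp (le_of_sq_le_mul_sup hc hQ hle)

variable [IsDomain R]

theorem sup_sq {I J : Ideal R} (hI : I ≠ ⊥) : (I ⊔ J) ^ 2 = I ^ 2 ⊔ J ^ 2 := by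
  have hIJ : I ⊔ J ≠ ⊥ := ne_bot_of_le_ne_bot hI le_sup_left
  refine hc _ _ _ (pow_ne_zero 2 hIJ) ?_ hIJ (sup_sq_mul_sup I J)
  exact ne_bot_of_le_ne_bot (pow_ne_zero 2 hI) le_sup_left

theorem exists_mul_eq_add_sq {a b : R} (ha : a ≠ 0) : ∃ r s : R, a * b = r * a ^ 2 + s * b ^ 2 := by
  have hab : a * b ∈ (span {a} ⊔ span {b} : Ideal R) ^ 2 :=
    sq (span {a} ⊔ span {b} : Ideal R) ▸ mul_mem_mul (mem_sup_left (mem_span_singleton_self a))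
      (mem_sup_right (mem_span_singleton_self b))
  rw [sup_sq hc (by simpa using ha), span_singleton_pow, span_singleton_pow, ← span_insert] at hab
  obtain ⟨r, s, hrs⟩ := mem_span_pair.mp hab
  exact ⟨r, s, hrs.symm⟩

variable {K : Type*} [Field K] [Algebra R K] [IsFractionRing R K]

theorem isUnit_coeIdeal_span_pair {a b : R} (ha : a ≠ 0) (hb : b ≠ 0) :
    IsUnit (span {a, b} : FractionalIdeal R⁰ K) := by
  obtain ⟨r, s, hrs⟩ := exists_mul_eq_add_sq hc ha (b := b)
  obtain ⟨t, ht⟩ : b ∣ r * a := dvd_of_sq_eq hc hb (c := -(r * s)) (d := 1) (by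
    linear_combination (-r) * hrs)
  have hA : a = t * a + s * b := mul_left_cancel₀ hb (by linear_combination hrs + a * ht)
  have key : (span {a, b} : Ideal R) * span {r, 1 - t} = span {b} := by
    rw [span_pair_mul_span_pair]
    refine le_antisymm (span_le.mpr ?_) ((span_singleton_le_iff_mem _).mpr ?_)
    · simp only [Set.insert_subset_iff, Set.singleton_subset_iff, SetLike.mem_coe,
        mem_span_singleton]
      exact ⟨⟨t, by linear_combination ht⟩, ⟨s, by linear_combination hA⟩, dvd_mul_right b r,
        dvd_mul_right b _⟩
    · have hsum : a * r + b * (1 - t) ∈ span {a * r, a * (1 - t), b * r, b * (1 - t)} :=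
        add_mem (subset_span (by simp)) (subset_span (by simp))
      rwa [show a * r + b * (1 - t) = b by linear_combination ht] at hsum
  have hunit := isUnit_coeIdeal_span_singleton (K := K) hb
  rw [← key, coeIdeal_mul] at hunit
  exact isUnit_of_mul_isUnit_left hunit

theorem isUnit_coeIdeal_span_insert {y : R} (hy : y ≠ 0) (t : Finset R) (ht : ∀ x ∈ t, x ≠ 0) :
    IsUnit (span (insert y (t : Set R)) : FractionalIdeal R⁰ K) := by
  classical
  induction t using Finset.induction_on generalizing y with
  | empty => simpa using isUnit_coeIdeal_span_singleton (K := K) hy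
  | insert z u _ ih =>
    have hu : ∀ x ∈ u, x ≠ 0 := fun x hx => ht x (Finset.mem_insert_of_mem hx)
    have hz : z ≠ 0 := ht z (Finset.mem_insert_self z u)
    have hzy := isUnit_coeIdeal_span_pair hc (K := K) hz hy
    have hyu := ih hy hu
    have hzu := ih hz hu
    rw [span_insert] at hzy hyu hzu
    rw [Finset.coe_insert, span_insert, span_insert, ← sup_assoc, sup_comm (span {y})]
    exact isUnit_coeIdeal_sup_sup hzy hyu (sup_comm (span {z}) _ ▸ hzu)

theorem isUnit_coeIdeal_of_fg {I : Ideal R} (hI : I ≠ ⊥) (hfg : I.FG) :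
    IsUnit (I : FractionalIdeal R⁰ K) := by
  classical
  obtain ⟨s, rfl⟩ := hfg
  obtain ⟨y, hy, hy0⟩ : ∃ y ∈ s, y ≠ 0 := by
    by_contra! h
    exact hI (Submodule.span_eq_bot.mpr h)
  have hunit :=
    isUnit_coeIdeal_span_insert hc (K := K) hy0 (s.erase 0) fun _ => Finset.ne_of_mem_erase
  rwa [← Finset.coe_insert, Finset.insert_eq_of_mem (Finset.mem_erase.mpr ⟨hy0, hy⟩),
    Finset.coe_erase, span_sdiff_singleton_zero] at hunit

theorem isDedekindDomain [IsNoetherianRing R] : IsDedekindDomain R := by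
  refine (isDedekindDomain_iff_mul_inv_cancel (K := FractionRing R)).mpr fun I hI => ?_
  obtain ⟨a, J, ha, rfl⟩ := exists_eq_spanSingleton_mul I
  have hJ : J ≠ ⊥ := by
    rintro rfl
    simp at hI
  have ha' : (algebraMap R (FractionRing R) a)⁻¹ ≠ 0 := by simpa using ha
  rw [mul_inv_cancel_iff_isUnit]
  exact ((mul_inv_cancel_iff_isUnit _).mp (spanSingleton_mul_inv _ ha')).mul
    (isUnit_coeIdeal_of_fg hc hJ (IsNoetherian.noetherian J))

end IsCancellationDomain

/-- An integral domain R is a Dedekind domain iff R is a Noetherian cancellation domain: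
R is Noetherian and I₁ * J = I₂ * J implies I₁ = I₂ for all nonzero ideals I₁, I₂, J. -/
theorem stmt17 (R : Type*) [CommRing R] [IsDomain R] :
    IsDedekindDomain R ↔
      IsNoetherianRing R ∧
        ∀ I₁ I₂ J : Ideal R, I₁ ≠ ⊥ → I₂ ≠ ⊥ → J ≠ ⊥ → I₁ * J = I₂ * J → I₁ = I₂ := by
  refine ⟨fun _ => ⟨inferInstance, fun _ _ _ _ _ hJ h => mul_right_cancel₀ hJ h⟩, ?_⟩
  rintro ⟨_, hc⟩
  exact IsCancellationDomain.isDedekindDomain hc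
end
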